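/- arXiv:1102.2263 — 2 statements merged into one kernel-verified Lean document; each statement's English description precedes it below -/
import Mathlib

section
/- Under the hypotheses that λ(t) ≤ η(t), H(t) ≤ 1, and K(t) = (λ(t))^{1/(1-γ)}/(η(t))^{γ/(1-γ)} + 1 > 1 for all t ∈ [0,T), with γ < 1, γ ≠ 0, λ, η > 0 continuous, the function D(t) = (1/e(t)) (λ(t)/η(t))^{1/(1-γ)} satisfies D(t) < 1 for all t ∈ [0,T). -/
/-!
With `F(s) = ∫ₜˢ H`, the function `s ↦ -exp (-F s)` is a primitive of `exp (-F s) * H s`, so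
`exp (-F T) + ∫ₜᵀ exp (-F s) H(s) ds = 1`. Hence `e t - 1 = ∫ₜᵀ exp (-F s) (K s - H s) ds`, which is
positive because `H ≤ 1 < K`. Since `λ ≤ η` and `1/(1-γ) > 0`, the factor `(λ/η)^{1/(1-γ)}` is at
most `1`, so `D t ≤ (e t)⁻¹ < 1`.
-/

open Real intervalIntegral Set

theorem integral_exp_neg_integral_mul_self {H : ℝ → ℝ} (hH : Continuous H) (a b : ℝ) :
    ∫ s in a..b, exp (-∫ v in a..s, H v) * H s = 1 - exp (-∫ v in a..b, H v) := by
  have hderiv : ∀ s, HasDerivAt (fun s => -exp (-∫ v in a..s, H v))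
      (exp (-∫ v in a..s, H v) * H s) s := fun s => by
    simpa using ((hH.integral_hasStrictDerivAt a s).hasDerivAt.neg.exp).fun_neg
  have hcont : Continuous fun s => exp (-∫ v in a..s, H v) * H s :=
    ((continuous_primitive (fun _ _ => hH.intervalIntegrable _ _) a).neg.rexp).mul hH
  rw [integral_eq_sub_of_hasDerivAt (fun s _ => hderiv s) (hcont.intervalIntegrable a b)]
  simp only [integral_same, neg_zero, exp_zero]
  ring

theorem one_lt_exp_neg_integral_add_integral_exp_neg_integral_mul {a b : ℝ} (hab : a < b)
    {H K : ℝ → ℝ} (hH : Continuous H) (hK : IntervalIntegrable K MeasureTheory.volume a b)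
    (hHK : ∀ s ∈ Ioo a b, H s < K s) :
    1 < exp (-∫ v in a..b, H v) + ∫ s in a..b, exp (-∫ v in a..s, H v) * K s := by
  have hweight : ContinuousOn (fun s => exp (-∫ v in a..s, H v)) (uIcc a b) :=
    (continuous_primitive (fun _ _ => hH.intervalIntegrable _ _) a).neg.rexp.continuousOn
  have hpos : 0 < ∫ s in a..b, exp (-∫ v in a..s, H v) * (K s - H s) :=
    intervalIntegral_pos_of_pos_on ((hK.sub (hH.intervalIntegrable a b)).continuousOn_mul hweight)
      (fun s hs => mul_pos (exp_pos _) (sub_pos.mpr (hHK s hs))) hab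
  simp only [mul_sub] at hpos
  rw [integral_sub (hK.continuousOn_mul hweight) ((hH.intervalIntegrable a b).continuousOn_mul
    hweight), integral_exp_neg_integral_mul_self hH] at hpos
  linarith

theorem D_lt_one_general
    (T : ℝ)
    (gamma : ℝ) (hγ1 : gamma < 1)
    (lam eta H : ℝ → ℝ)
    (hlam : Continuous lam) (heta : Continuous eta) (hH : Continuous H)
    (hlampos : ∀ t, 0 < lam t) (hetapos : ∀ t, 0 < eta t)
    (hle : ∀ t, t ∈ Ico (0:ℝ) T → lam t ≤ eta t)
    (hH1 : ∀ t, t ∈ Ico (0:ℝ) T → H t ≤ 1)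
    (K : ℝ → ℝ)
    (hK : ∀ t, K t = (lam t) ^ (1/(1-gamma)) / (eta t) ^ (gamma/(1-gamma)) + 1)
    (hK1 : ∀ t, t ∈ Ico (0:ℝ) T → 1 < K t)
    (e D : ℝ → ℝ)
    (he : ∀ t, e t = Real.exp (-∫ v in t..T, H v)
        + ∫ s in t..T, Real.exp (-∫ v in t..s, H v) * K s)
    (hD : ∀ t, D t = (e t)⁻¹ * (lam t / eta t) ^ (1/(1-gamma))) :
    ∀ t ∈ Ico (0:ℝ) T, D t < 1 := by
  intro t ht
  have hKcont : Continuous K := by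
    rw [funext hK]
    exact ((hlam.rpow_const fun s => .inl (hlampos s).ne').div
      (heta.rpow_const fun s => .inl (hetapos s).ne')
      fun s => (rpow_pos_of_pos (hetapos s) _).ne').add continuous_const
  have he1 : 1 < e t := he t ▸ one_lt_exp_neg_integral_add_integral_exp_neg_integral_mul ht.2 hH
    (hKcont.intervalIntegrable _ _) fun s hs =>
      have hs' : s ∈ Ico 0 T := ⟨ht.1.trans hs.1.le, hs.2⟩
      (hH1 s hs').trans_lt (hK1 s hs')
  have hratio : (lam t / eta t) ^ (1/(1-gamma)) ≤ 1 :=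
    rpow_le_one (div_pos (hlampos t) (hetapos t)).le
      ((div_le_one (hetapos t)).mpr (hle t ht)) (one_div_nonneg.mpr (sub_nonneg.mpr hγ1.le))
  rw [hD t, inv_mul_lt_one₀ (zero_lt_one.trans he1)]
  exact hratio.trans_lt he1

theorem D_lt_one
    (T : ℝ) (hT : 0 < T)
    (gamma : ℝ) (hγ1 : gamma < 1) (hγ0 : gamma ≠ 0)
    (lam eta H : ℝ → ℝ)
    (hlam : Continuous lam) (heta : Continuous eta) (hH : Continuous H)
    (hlampos : ∀ t, 0 < lam t) (hetapos : ∀ t, 0 < eta t)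
    (hle : ∀ t, t ∈ Ico (0:ℝ) T → lam t ≤ eta t)
    (hH1 : ∀ t, t ∈ Ico (0:ℝ) T → H t ≤ 1)
    (K : ℝ → ℝ)
    (hK : ∀ t, K t = (lam t) ^ (1/(1-gamma)) / (eta t) ^ (gamma/(1-gamma)) + 1)
    (hK1 : ∀ t, t ∈ Ico (0:ℝ) T → 1 < K t)
    (e D : ℝ → ℝ)
    (he : ∀ t, e t = Real.exp (-∫ v in t..T, H v)
        + ∫ s in t..T, Real.exp (-∫ v in t..s, H v) * K s)
    (hD : ∀ t, D t = (e t)⁻¹ * (lam t / eta t) ^ (1/(1-gamma))) :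
    ∀ t ∈ Ico (0:ℝ) T, D t < 1 :=
  D_lt_one_general T gamma hγ1 lam eta H hlam heta hH hlampos hetapos hle hH1 K hK hK1 e D he hD
end

section
/- Monotonicity of insurance purchase in the discount rate: fix t ∈ [0,T), x ≥ 0, γ < 1 with γ ≠ 0, and suppose ρ₁ < ρ₂. Let Hᵢ(t) = (λ(t)+ρᵢ)/(1-γ) - γΣ(t)/(1-γ)² - γ(r(t)+η(t))/(1-γ), eᵢ(t) = exp(-∫ₜᵀ Hᵢ) + ∫ₜᵀ exp(-∫ₜˢ Hᵢ) K(s) ds, Dᵢ(t) = eᵢ(t)⁻¹(λ(t)/η(t))^{1/(1-γ)}, pᵢ*(t,x) = η(t)(Dᵢ(t)(x+b(t)) - x). If x + b(t) > 0 and K(s) > 0 for all s, then p₁*(t,x) < p₂*(t,x). -/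
open Real intervalIntegral Set

theorem insurance_increasing_in_discount
    (T : ℝ) (hT : 0 < T)
    (gamma : ℝ) (hγ1 : gamma < 1) (hγ0 : gamma ≠ 0)
    (lam eta r Sigma : ℝ → ℝ)
    (hlam : Continuous lam) (heta : Continuous eta)
    (hr : Continuous r) (hSigma : Continuous Sigma)
    (hlampos : ∀ s, 0 < lam s) (hetapos : ∀ s, 0 < eta s)
    (K : ℝ → ℝ)
    (hK : ∀ s, K s = (lam s) ^ (1/(1-gamma)) / (eta s) ^ (gamma/(1-gamma)) + 1)
    (hKpos : ∀ s, 0 < K s)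
    (rho1 rho2 : ℝ) (hrho1 : 0 < rho1) (hrho : rho1 < rho2)
    (H1 H2 : ℝ → ℝ)
    (hH1 : ∀ v, H1 v = (lam v + rho1)/(1-gamma) - gamma * Sigma v/(1-gamma)^2
        - gamma/(1-gamma) * (r v + eta v))
    (hH2 : ∀ v, H2 v = (lam v + rho2)/(1-gamma) - gamma * Sigma v/(1-gamma)^2
        - gamma/(1-gamma) * (r v + eta v))
    (e1 e2 : ℝ → ℝ)
    (he1 : ∀ t, e1 t = Real.exp (-∫ v in t..T, H1 v)
        + ∫ s in t..T, Real.exp (-∫ v in t..s, H1 v) * K s)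
    (he2 : ∀ t, e2 t = Real.exp (-∫ v in t..T, H2 v)
        + ∫ s in t..T, Real.exp (-∫ v in t..s, H2 v) * K s)
    (D1 D2 : ℝ → ℝ)
    (hD1 : ∀ t, D1 t = (e1 t)⁻¹ * (lam t / eta t) ^ (1/(1-gamma)))
    (hD2 : ∀ t, D2 t = (e2 t)⁻¹ * (lam t / eta t) ^ (1/(1-gamma)))
    (t x : ℝ) (ht : t ∈ Ico (0:ℝ) T) (hx : 0 ≤ x)
    (b : ℝ) (hxb : 0 < x + b) :
    eta t * (D1 t * (x + b) - x) < eta t * (D2 t * (x + b) - x) := by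
  have h1γ : (0:ℝ) < 1 - gamma := by linarith
  set δ : ℝ := (rho2 - rho1)/(1-gamma) with hδ
  have hδpos : 0 < δ := div_pos (by linarith) h1γ
  have htT : t < T := ht.2
  have hH1c : Continuous H1 := by
    have : H1 = fun v => (lam v + rho1)/(1-gamma) - gamma * Sigma v/(1-gamma)^2
        - gamma/(1-gamma) * (r v + eta v) := funext hH1
    rw [this]; fun_prop
  have hHdiff : ∀ v, H2 v = H1 v + δ := by
    intro v; rw [hH1, hH2, hδ]; ring
  have hint : ∀ s, (∫ v in t..s, H2 v) = (∫ v in t..s, H1 v) + δ * (s - t) := by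
    intro s
    have : (∫ v in t..s, H2 v) = ∫ v in t..s, (H1 v + δ) := by
      congr 1; funext v; exact hHdiff v
    rw [this, intervalIntegral.integral_add (hH1c.intervalIntegrable t s)
      (intervalIntegrable_const), intervalIntegral.integral_const, smul_eq_mul, mul_comm]
  -- continuity helpers
  have hprim : Continuous fun s => ∫ v in t..s, H1 v :=
    intervalIntegral.continuous_primitive (fun a b => hH1c.intervalIntegrable a b) t
  have hKc : Continuous K := by
    have : K = fun s => (lam s) ^ (1/(1-gamma)) / (eta s) ^ (gamma/(1-gamma)) + 1 :=
      funext hK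
    rw [this]
    apply Continuous.add _ continuous_const
    apply Continuous.div
    · exact hlam.rpow_const (fun s => Or.inl (hlampos s).ne')
    · exact heta.rpow_const (fun s => Or.inl (hetapos s).ne')
    · exact fun s => (Real.rpow_pos_of_pos (hetapos s) _).ne'
  have hf1c : Continuous fun s => Real.exp (-∫ v in t..s, H1 v) * K s :=
    ((hprim.neg).rexp).mul hKc
  have hf2c : Continuous fun s => Real.exp (-∫ v in t..s, H2 v) * K s := by
    have : (fun s => Real.exp (-∫ v in t..s, H2 v) * K s)
        = fun s => Real.exp (-((∫ v in t..s, H1 v) + δ * (s - t))) * K s := by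
      funext s; rw [hint s]
    rw [this]; fun_prop
  -- e2 t < e1 t
  have hexp_lt : Real.exp (-∫ v in t..T, H2 v) < Real.exp (-∫ v in t..T, H1 v) := by
    rw [hint T]
    apply Real.exp_lt_exp.mpr
    nlinarith [mul_pos hδpos (sub_pos.mpr htT)]
  have hint_le : (∫ s in t..T, Real.exp (-∫ v in t..s, H2 v) * K s)
      ≤ ∫ s in t..T, Real.exp (-∫ v in t..s, H1 v) * K s := by
    apply intervalIntegral.integral_mono_on htT.le
      (hf2c.intervalIntegrable t T) (hf1c.intervalIntegrable t T)
    intro s hs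
    have hsle : t ≤ s := hs.1
    apply mul_le_mul_of_nonneg_right _ (hKpos s).le
    apply Real.exp_le_exp.mpr
    rw [hint s]
    nlinarith [mul_nonneg hδpos.le (sub_nonneg.mpr hsle)]
  have he2lt : e2 t < e1 t := by
    rw [he1, he2]; exact add_lt_add_of_lt_of_le hexp_lt hint_le
  have he2pos : 0 < e2 t := by
    rw [he2]
    have : 0 ≤ ∫ s in t..T, Real.exp (-∫ v in t..s, H2 v) * K s := by
      apply intervalIntegral.integral_nonneg htT.le
      intro u hu
      exact mul_nonneg (Real.exp_pos _).le (hKpos u).le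
    positivity
  have he1pos : 0 < e1 t := he2pos.trans he2lt
  have hinv : (e1 t)⁻¹ < (e2 t)⁻¹ := by
    exact (inv_lt_inv₀ he1pos he2pos).mpr he2lt
  have hPpos : 0 < (lam t / eta t) ^ (1/(1-gamma)) :=
    Real.rpow_pos_of_pos (div_pos (hlampos t) (hetapos t)) _
  have hD : D1 t < D2 t := by
    rw [hD1, hD2]
    exact mul_lt_mul_of_pos_right hinv hPpos
  have := mul_lt_mul_of_pos_right hD hxb
  exact mul_lt_mul_of_pos_left (by linarith) (hetapos t)
end
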